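/- arXiv:1701.06269 — 5 statements merged into one kernel-verified Lean document; each statement's English description precedes it below -/
import Mathlib

section
/- Let f(r) = 2g(r)^4/σ'(r)^2 + (g(r)^2/σ'(r))(6/r - r), where σ(r) = (1 - e^{-r^2/4})/(r^2/4) and g(r) = e^{-r^2/8}. Then f(r) ≥ 0 for all r > 0. -/
open Real

noncomputable def oseenSigma (r : ℝ) : ℝ := (1 - Real.exp (-r ^ 2 / 4)) / (r ^ 2 / 4)

noncomputable def oseenG (r : ℝ) : ℝ := Real.exp (-r ^ 2 / 8)

noncomputable def oseenF (r : ℝ) : ℝ :=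
  2 * oseenG r ^ 4 / (deriv oseenSigma r) ^ 2 +
    oseenG r ^ 2 / deriv oseenSigma r * (6 / r - r)

lemma hasDerivAt_oseenSigma (r : ℝ) (hr : r ≠ 0) :
    HasDerivAt oseenSigma
      ((2 * r ^ 2 * Real.exp (-r ^ 2 / 4) + 8 * Real.exp (-r ^ 2 / 4) - 8) / r ^ 3) r := by
  have ha : HasDerivAt (fun x : ℝ => -x ^ 2 / 4) (-(2 * r) / 4) r := by
    simpa using ((hasDerivAt_pow 2 r).neg.div_const 4)
  have hb := ha.exp
  have hu : HasDerivAt (fun x : ℝ => 1 - Real.exp (-x ^ 2 / 4))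
      (-(Real.exp (-r ^ 2 / 4) * (-(2 * r) / 4))) r := hb.const_sub 1
  have hv : HasDerivAt (fun x : ℝ => x ^ 2 / 4) (2 * r / 4) r := by
    simpa using (hasDerivAt_pow 2 r).div_const 4
  have hv0 : r ^ 2 / 4 ≠ 0 := by positivity
  have hdiv := hu.div hv hv0
  have : oseenSigma = fun x : ℝ => (1 - Real.exp (-x ^ 2 / 4)) / (x ^ 2 / 4) := rfl
  rw [this]
  refine hdiv.congr_deriv ?_
  field_simp
  ring

lemma key_ineq (x : ℝ) (hx : 0 ≤ x) :
    0 ≤ (x + 12) * Real.exp (-x / 4) + 2 * x - 12 := by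
  set F : ℝ → ℝ := fun y => (y + 12) * Real.exp (-y / 4) + (2 * y - 12) with hF
  have hdF : ∀ y : ℝ, HasDerivAt F (Real.exp (-y / 4) * (-2 - y / 4) + 2) y := by
    intro y
    have h1 : HasDerivAt (fun x : ℝ => -x / 4) (-1 / 4) y := by
      simpa using (hasDerivAt_id y).neg.div_const 4
    have h2 := h1.exp
    have h3 : HasDerivAt (fun x : ℝ => x + 12) 1 y := (hasDerivAt_id y).add_const 12
    have h4 := h3.mul h2
    have h5 : HasDerivAt (fun x : ℝ => 2 * x - 12) 2 y := by
      simpa using ((hasDerivAt_id y).const_mul 2).sub_const 12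
    have h6 := h4.add h5
    refine h6.congr_deriv ?_
    ring
  have hmono : MonotoneOn F (Set.Ici 0) := by
    apply monotoneOn_of_deriv_nonneg (convex_Ici 0)
    · exact fun y _ => (hdF y).continuousAt.continuousWithinAt
    · exact fun y _ => (hdF y).differentiableAt.differentiableWithinAt
    · intro y hy
      rw [interior_Ici] at hy
      rw [(hdF y).deriv]
      have hy0 : (0:ℝ) ≤ y := le_of_lt hy
      have h1 : y / 4 + 1 ≤ Real.exp (y / 4) := Real.add_one_le_exp (y / 4)
      have h2 : Real.exp (-y / 4) * Real.exp (y / 4) = 1 := by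
        rw [← Real.exp_add, show -y / 4 + y / 4 = (0:ℝ) by ring, Real.exp_zero]
      have h3 : 0 < Real.exp (-y / 4) := Real.exp_pos _
      have h4 : Real.exp (-y / 4) ≤ 1 :=
        Real.exp_le_one_iff.mpr (by linarith)
      nlinarith [mul_le_mul_of_nonneg_left h1 h3.le]
  have h0 : F 0 ≤ F x := hmono Set.self_mem_Ici hx hx
  have hF0 : F 0 = 0 := by simp [hF]
  have hFx : F x = (x + 12) * Real.exp (-x / 4) + 2 * x - 12 := by
    simp only [hF]; ring
  rw [hF0, hFx] at h0
  exact h0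

theorem stmt_1 : ∀ r : ℝ, 0 < r → oseenF r ≥ 0 := by
  intro r hr
  have hrne : r ≠ 0 := ne_of_gt hr
  set E : ℝ := Real.exp (-r ^ 2 / 4) with hE
  have hE0 : 0 < E := Real.exp_pos _
  have hσ : deriv oseenSigma r = (2 * r ^ 2 * E + 8 * E - 8) / r ^ 3 :=
    (hasDerivAt_oseenSigma r hrne).deriv
  -- N < 0
  have hmul : E * Real.exp (r ^ 2 / 4) = 1 := by
    rw [hE, ← Real.exp_add, show -r ^ 2 / 4 + r ^ 2 / 4 = (0:ℝ) by ring, Real.exp_zero]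
  have hexp : r ^ 2 / 4 + 1 < Real.exp (r ^ 2 / 4) :=
    Real.add_one_lt_exp (by positivity)
  have hN : 2 * r ^ 2 * E + 8 * E - 8 < 0 := by
    nlinarith [Real.exp_pos (r ^ 2 / 4), hE0]
  have hNne : 2 * r ^ 2 * E + 8 * E - 8 ≠ 0 := ne_of_lt hN
  -- g^2 = E
  have hg2 : oseenG r ^ 2 = E := by
    rw [oseenG, hE, sq, ← Real.exp_add]
    congr 1
    ring
  have hg4 : oseenG r ^ 4 = E ^ 2 := by
    have : oseenG r ^ 4 = (oseenG r ^ 2) ^ 2 := by ring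
    rw [this, hg2]
  -- key nonneg quantity
  have hkey : 0 ≤ (r ^ 2 + 12) * E + 2 * r ^ 2 - 12 := by
    rw [hE]
    exact key_ineq (r ^ 2) (sq_nonneg r)
  -- express oseenF
  have hFeq : oseenF r =
      4 * E * r ^ 2 * ((r ^ 2 + 12) * E + 2 * r ^ 2 - 12) /
        (2 * r ^ 2 * E + 8 * E - 8) ^ 2 := by
    rw [oseenF, hg2, hg4, hσ]
    field_simp
    ring
  rw [hFeq]
  apply div_nonneg
  · positivity
  · positivity
end

section
/- Let σ(r) = (1-e^{-r^2/4})/(r^2/4). Then for all r > 0, f(r) ≥ r^2/(4(e^{r^2/4} - 1 - r^2/4)), where f is as in the commutator lemma: f(r) = 2g^4/σ'^2 + (g^2/σ')(6/r - r), g(r)=e^{-r^2/8}. -/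
open Real

lemma hasDerivSigma (r : ℝ) (hr : r ≠ 0) :
    HasDerivAt oseenSigma ((r / 2 * (Real.exp (-r ^ 2 / 4) * (r ^ 2 / 4 + 1) - 1)) / (r ^ 2 / 4) ^ 2) r := by
  have h1 : HasDerivAt (fun x : ℝ => -x ^ 2 / 4) (-(2 * r ^ 1) / 4) r :=
    ((hasDerivAt_pow 2 r).neg).div_const 4
  have h2 := h1.exp
  have h3 := (hasDerivAt_const r (1 : ℝ)).sub h2
  have h4 : HasDerivAt (fun x : ℝ => x ^ 2 / 4) ((2 * r ^ 1) / 4) r :=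
    (hasDerivAt_pow 2 r).div_const 4
  have h5 := h3.div h4 (by positivity)
  exact h5.congr_deriv (by
    simp only [Pi.sub_apply]
    field_simp
    ring)

lemma phi_deriv_nonneg (u : ℝ) : 0 ≤ (u - 1) * Real.exp u + 1 := by
  have h1 : Real.exp (-u) * Real.exp u = 1 := by
    rw [← Real.exp_add]; simp
  have h2 : -u + 1 ≤ Real.exp (-u) := Real.add_one_le_exp (-u)
  nlinarith [Real.exp_pos u]

lemma phi_nonneg (u : ℝ) (hu : 0 ≤ u) : 0 ≤ (u - 2) * Real.exp u + u + 2 := by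
  set φ : ℝ → ℝ := fun u => (u - 2) * Real.exp u + u + 2 with hφ
  have hderiv : ∀ x : ℝ, HasDerivAt φ ((x - 1) * Real.exp x + 1) x := by
    intro x
    have h := ((((hasDerivAt_id x).sub_const 2).mul (Real.hasDerivAt_exp x)).add
      (hasDerivAt_id x)).add_const 2
    exact h.congr_deriv (by
    simp; ring)
  have hmono : MonotoneOn φ (Set.Ici (0:ℝ)) := by
    apply monotoneOn_of_deriv_nonneg (convex_Ici 0)
    · exact Continuous.continuousOn (by simp only [hφ]; continuity)
    · intro x hx
      exact (hderiv x).differentiableAt.differentiableWithinAt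
    · intro x hx
      rw [(hderiv x).deriv]
      exact phi_deriv_nonneg x
  have h0 : φ 0 = 0 := by simp [hφ]
  have := hmono (Set.self_mem_Ici) (Set.mem_Ici.mpr hu) hu
  rw [h0] at this
  exact this

theorem stmt_2 :
    ∀ r : ℝ, 0 < r →
      oseenF r ≥ r ^ 2 / (4 * (Real.exp (r ^ 2 / 4) - 1 - r ^ 2 / 4)) := by
  intro r hr
  have hr' : r ≠ 0 := hr.ne'
  have hu : 0 < r ^ 2 / 4 := by positivity
  have ha : 0 < Real.exp (-r ^ 2 / 4) := Real.exp_pos _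
  have hxe : Real.exp (r ^ 2 / 4) = (Real.exp (-r ^ 2 / 4))⁻¹ := by
    rw [← Real.exp_neg]; ring_nf
  have hlt : 1 + r ^ 2 / 4 < (Real.exp (-r ^ 2 / 4))⁻¹ := by
    rw [← hxe]
    linarith [Real.add_one_lt_exp hu.ne']
  have hE : 0 < (Real.exp (-r ^ 2 / 4))⁻¹ - 1 - r ^ 2 / 4 := by linarith
  have hax : Real.exp (-r ^ 2 / 4) * (Real.exp (-r ^ 2 / 4))⁻¹ = 1 := mul_inv_cancel₀ ha.ne'
  have key : 0 ≤ (r ^ 2 / 4 - 2) * (Real.exp (-r ^ 2 / 4))⁻¹ + r ^ 2 / 4 + 2 := by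
    rw [← hxe]
    exact phi_nonneg _ hu.le
  have key' : (2 - r ^ 2 / 4) * ((Real.exp (-r ^ 2 / 4))⁻¹ - 1 - r ^ 2 / 4) ≤ (r ^ 2 / 4) ^ 2 := by
    nlinarith [key]
  have hg2 : oseenG r ^ 2 = Real.exp (-r ^ 2 / 4) := by
    rw [oseenG, sq, ← Real.exp_add]; ring_nf
  have hg4 : oseenG r ^ 4 = Real.exp (-r ^ 2 / 4) ^ 2 := by
    rw [show (4:ℕ) = 2 * 2 from rfl, pow_mul, hg2]
  have hD := (hasDerivSigma r hr').deriv
  have hDE : deriv oseenSigma r =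
      -(8 * Real.exp (-r ^ 2 / 4) * ((Real.exp (-r ^ 2 / 4))⁻¹ - 1 - r ^ 2 / 4)) / r ^ 3 := by
    rw [hD]
    rw [div_eq_div_iff (by positivity) (by positivity)]
    field_simp
    ring
  rw [ge_iff_le]
  unfold oseenF
  rw [hDE, hg4, hg2, hxe]
  generalize hEE : (Real.exp (-r ^ 2 / 4))⁻¹ - 1 - r ^ 2 / 4 = E at hE key' ⊢
  generalize haA : Real.exp (-r ^ 2 / 4) = a at ha ⊢
  have heq : 2 * a ^ 2 / (-(8 * a * E) / r ^ 3) ^ 2 + a / (-(8 * a * E) / r ^ 3) * (6 / r - r)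
      = r ^ 6 / (32 * E ^ 2) + (r ^ 4 - 6 * r ^ 2) * (4 * E) / (32 * E ^ 2) := by
    field_simp
    ring
  rw [heq, ← add_div, div_le_div_iff₀ (by positivity) (by positivity)]
  nlinarith [mul_le_mul_of_nonneg_left key' (le_of_lt (by positivity : (0:ℝ) < 16 * r ^ 2 * E))]
end

section
/- Let k be an integer with |k| ≥ 1 and let Ã_k = -∂_r^2 + (k^2 - 1/4)/r^2 + r^2/16 - 1/2 acting on smooth compactly supported functions on (0,∞). Then ⟨Ã_k w, w⟩_{L^2(0,∞)} ≥ (1/2)‖w‖²_{L^2(0,∞)}. -/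
open Real MeasureTheory Set

theorem stmt_8 (k : ℤ) (hk : 1 ≤ |k|) (w : ℝ → ℝ)
    (hw : ContDiff ℝ (⊤ : ℕ∞) w) (hsupp : HasCompactSupport w)
    (hsupp' : tsupport w ⊆ Ioi (0 : ℝ)) :
    (∫ r in Ioi (0 : ℝ),
        (-deriv (deriv w) r +
          (((k : ℝ) ^ 2 - 1 / 4) / r ^ 2 + r ^ 2 / 16 - 1 / 2) * w r) * w r) ≥
      1 / 2 * ∫ r in Ioi (0 : ℝ), (w r) ^ 2 := by
  set f : ℝ → ℝ := fun r => (-deriv (deriv w) r +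
          (((k : ℝ) ^ 2 - 1 / 4) / r ^ 2 + r ^ 2 / 16 - 1 / 2) * w r) * w r with hf
  -- smoothness facts
  have hw0 : ContDiff ℝ (↑(⊤:ℕ∞)) w := hw.of_le (by simp)
  have hw1 : ContDiff ℝ (↑(⊤:ℕ∞)) (deriv w) := (contDiff_infty_iff_deriv.mp hw0).2
  have hwd : Differentiable ℝ w := (contDiff_infty_iff_deriv.mp hw0).1
  have hwd1 : Differentiable ℝ (deriv w) := (contDiff_infty_iff_deriv.mp hw1).1
  have hcw : Continuous w := hw.continuous
  have hcw1 : Continuous (deriv w) := hw1.continuous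
  have hcw2 : Continuous (deriv (deriv w)) := (contDiff_infty_iff_deriv.mp hw1).2.continuous
  -- support bounds
  set K : Set ℝ := tsupport w ∪ {1} with hK
  have hKc : IsCompact K := hsupp.union isCompact_singleton
  have hKne : K.Nonempty := ⟨1, Or.inr rfl⟩
  have hKpos : K ⊆ Ioi 0 := union_subset hsupp' (by simp)
  obtain ⟨m, hmK, hm⟩ := hKc.exists_isLeast hKne
  obtain ⟨M, hMK, hM⟩ := hKc.exists_isGreatest hKne
  have hm0 : (0:ℝ) < m := hKpos hmK
  set c : ℝ := m / 2 with hcdef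
  set d : ℝ := M + 1 with hddef
  have hc0 : (0:ℝ) < c := by positivity
  have hmM : m ≤ M := hM hmK
  have hcd : c ≤ d := by
    have : c < m := by simp [hcdef]; linarith
    linarith
  have hts : ∀ r ∈ tsupport w, c < r ∧ r < d := by
    intro r hr
    have h1 := hm (Or.inl hr)
    have h2 := hM (Or.inl hr)
    constructor
    · simp only [hcdef]; linarith
    · simp only [hddef]; linarith
  have hcn : c ∉ tsupport w := fun h => by have := (hts c h).1; linarith
  have hdn : d ∉ tsupport w := fun h => by have := (hts d h).2; linarith
  have hwc : w c = 0 := image_eq_zero_of_notMem_tsupport hcn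
  have hwd0 : w d = 0 := image_eq_zero_of_notMem_tsupport hdn
  have hw'c : deriv w c = 0 := by
    by_contra h
    exact hcn (support_deriv_subset (Function.mem_support.mpr h))
  have hw'd : deriv w d = 0 := by
    by_contra h
    exact hdn (support_deriv_subset (Function.mem_support.mpr h))
  -- vanishing of w outside Ioc c d and outside Ioi 0
  have hz : ∀ r : ℝ, r ∉ Ioc c d → w r = 0 := by
    intro r hr
    by_contra h
    have hr' : r ∈ tsupport w := subset_tsupport w h
    obtain ⟨h1, h2⟩ := hts r hr'
    exact hr ⟨h1, le_of_lt h2⟩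
  have hz0 : ∀ r : ℝ, r ∉ Ioi (0:ℝ) → w r = 0 := by
    intro r hr
    by_contra h
    exact hr (hsupp' (subset_tsupport w h))
  -- reduce set integrals to interval integrals
  have e1 : (∫ r in Ioi (0:ℝ), f r) = ∫ r in c..d, f r := by
    rw [intervalIntegral.integral_of_le hcd,
      setIntegral_eq_integral_of_forall_compl_eq_zero (fun r hr => by simp [hf, hz0 r hr]),
      setIntegral_eq_integral_of_forall_compl_eq_zero (fun r hr => by simp [hf, hz r hr])]
  have e2 : (∫ r in Ioi (0:ℝ), (w r)^2) = ∫ r in c..d, (w r)^2 := by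
    rw [intervalIntegral.integral_of_le hcd,
      setIntegral_eq_integral_of_forall_compl_eq_zero (fun r hr => by simp [hz0 r hr]),
      setIntegral_eq_integral_of_forall_compl_eq_zero (fun r hr => by simp [hz r hr])]
  have hpos : ∀ x ∈ uIcc c d, (0:ℝ) < x := by
    rw [uIcc_of_le hcd]; exact fun x hx => lt_of_lt_of_le hc0 hx.1
  -- integration by parts 1
  have ibp1 : (∫ r in c..d, (deriv (deriv w) r * w r + deriv w r * deriv w r)) = 0 := by
    rw [intervalIntegral.integral_deriv_mul_eq_sub
      (fun x _ => (hwd1 x).hasDerivAt) (fun x _ => (hwd x).hasDerivAt)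
      (hcw2.intervalIntegrable c d) (hcw1.intervalIntegrable c d)]
    rw [hwc, hwd0]; ring
  -- integration by parts 2 : with g r = 3/2 r⁻¹ - 1/4 r
  have hg : ∀ x ∈ uIcc c d, HasDerivAt (fun r : ℝ => 3/2 * r⁻¹ - 1/4 * r)
      (3/2 * (-(x^2)⁻¹) - 1/4 * 1) x :=
    fun x hx => ((hasDerivAt_inv (hpos x hx).ne').const_mul (3/2:ℝ)).sub
      ((hasDerivAt_id x).const_mul (1/4:ℝ))
  have hinv2 : ContinuousOn (fun r : ℝ => (r^2)⁻¹) (uIcc c d) :=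
    (continuous_pow 2).continuousOn.inv₀ fun x hx => pow_ne_zero 2 (hpos x hx).ne'
  have hinv : ContinuousOn (fun r : ℝ => r⁻¹) (uIcc c d) :=
    continuousOn_id.inv₀ fun x hx => (hpos x hx).ne'
  have hgcont : ContinuousOn (fun r : ℝ => 3/2 * r⁻¹ - 1/4 * r) (uIcc c d) :=
    (continuousOn_const.mul hinv).sub (continuousOn_const.mul continuousOn_id)
  have hg'int : IntervalIntegrable (fun x : ℝ => 3/2 * (-(x^2)⁻¹) - 1/4 * 1) volume c d :=
    ((continuousOn_const.mul hinv2.neg).sub continuousOn_const).intervalIntegrable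
  have hv2 : ∀ x ∈ uIcc c d, HasDerivAt (fun r => (w r)^2) (2 * w x * deriv w x) x := by
    intro x _
    have := (hasDerivAt_pow 2 (w x)).comp x ((hwd x).hasDerivAt)
    exact this.congr_deriv (by norm_num)
  have hv2'int : IntervalIntegrable (fun x => 2 * w x * deriv w x) volume c d :=
    (((continuous_const.mul hcw).mul hcw1)).intervalIntegrable c d
  have ibp2 : (∫ r in c..d, ((3/2 * (-(r^2)⁻¹) - 1/4 * 1) * (w r)^2 +
      (3/2 * r⁻¹ - 1/4 * r) * (2 * w r * deriv w r))) = 0 := by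
    rw [intervalIntegral.integral_deriv_mul_eq_sub hg hv2 hg'int hv2'int]
    rw [hwc, hwd0]; ring
  -- the nonnegative part
  set B : ℝ → ℝ := fun r => (deriv w r - (3/2 * r⁻¹ - 1/4 * r) * w r)^2 +
      ((k:ℝ)^2 - 1) / r^2 * (w r)^2 with hB
  have hk2 : (1:ℝ) ≤ (k:ℝ)^2 := by
    have : (1:ℤ) ≤ k^2 := by nlinarith [sq_abs k, abs_nonneg k]
    exact_mod_cast this
  have hBcont : ContinuousOn B (uIcc c d) := by
    apply ContinuousOn.add
    · exact ((hcw1.continuousOn.sub (((continuousOn_const.mul hinv).sub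
        (continuousOn_const.mul continuousOn_id)).mul hcw.continuousOn)).pow 2)
    · exact (continuousOn_const.mul hinv2).mul (hcw.continuousOn.pow 2)
  have hBint : IntervalIntegrable B volume c d := hBcont.intervalIntegrable
  have hBnn : (0:ℝ) ≤ ∫ r in c..d, B r := by
    apply intervalIntegral.integral_nonneg hcd
    intro u hu
    have h1 : (0:ℝ) ≤ ((k:ℝ)^2 - 1) / u^2 * (w u)^2 :=
      mul_nonneg (div_nonneg (by linarith) (sq_nonneg u)) (sq_nonneg _)
    have h2 : (0:ℝ) ≤ (deriv w u - (3/2 * u⁻¹ - 1/4 * u) * w u)^2 := sq_nonneg _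
    simp only [hB]; linarith
  -- pointwise identity
  have hEq : EqOn (fun r => f r - 1/2 * (w r)^2)
      (fun r => B r + (-(deriv (deriv w) r * w r + deriv w r * deriv w r) +
        ((3/2 * (-(r^2)⁻¹) - 1/4 * 1) * (w r)^2 +
         (3/2 * r⁻¹ - 1/4 * r) * (2 * w r * deriv w r)))) (uIcc c d) := by
    intro r hr
    have hr0 : r ≠ 0 := (hpos r hr).ne'
    simp only [hf, hB]
    field_simp
    ring
  -- integrability of remaining pieces
  have hI1int : IntervalIntegrable (fun r => deriv (deriv w) r * w r + deriv w r * deriv w r)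
      volume c d := ((hcw2.mul hcw).add (hcw1.mul hcw1)).intervalIntegrable c d
  have hI2int : IntervalIntegrable (fun r => (3/2 * (-(r^2)⁻¹) - 1/4 * 1) * (w r)^2 +
      (3/2 * r⁻¹ - 1/4 * r) * (2 * w r * deriv w r)) volume c d := by
    apply ContinuousOn.intervalIntegrable
    apply ContinuousOn.add
    · exact ((continuousOn_const.mul hinv2.neg).sub continuousOn_const).mul
        (hcw.continuousOn.pow 2)
    · exact hgcont.mul ((continuous_const.mul hcw).mul hcw1).continuousOn
  have hfint : IntervalIntegrable f volume c d := by
    apply ContinuousOn.intervalIntegrable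
    apply ContinuousOn.mul _ hcw.continuousOn
    apply ContinuousOn.add hcw2.continuousOn.neg
    apply ContinuousOn.mul _ hcw.continuousOn
    exact ((continuousOn_const.mul hinv2).add
      ((continuousOn_id.pow 2).div_const 16)).sub continuousOn_const
  have hw2int : IntervalIntegrable (fun r => (w r)^2) volume c d :=
    (hcw.pow 2).intervalIntegrable c d
  -- assemble
  have hnI1int : IntervalIntegrable
      (fun r => -(deriv (deriv w) r * w r + deriv w r * deriv w r)) volume c d :=
    ((hcw2.mul hcw).add (hcw1.mul hcw1)).neg.intervalIntegrable c d
  have ibp1' : (∫ r in c..d, -(deriv (deriv w) r * w r + deriv w r * deriv w r)) = 0 := by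
    rw [intervalIntegral.integral_neg, ibp1, neg_zero]
  have main : (∫ r in c..d, (f r - 1/2 * (w r)^2)) = ∫ r in c..d, B r := by
    rw [intervalIntegral.integral_congr hEq,
       intervalIntegral.integral_add hBint (hnI1int.add hI2int),
       intervalIntegral.integral_add hnI1int hI2int,
       ibp1', ibp2]
    ring
  have hsub : (∫ r in c..d, (f r - 1/2 * (w r)^2)) =
      (∫ r in c..d, f r) - 1/2 * ∫ r in c..d, (w r)^2 := by
    rw [intervalIntegral.integral_sub hfint (hw2int.const_mul (1/2)),
      intervalIntegral.integral_const_mul]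
  rw [ge_iff_le, e1, e2]
  have h := hsub.symm.trans main
  linarith [hBnn, h]
end

section
/- For 0 < θ < π/4 and r > 0, let F₁(z) = (1 - e^{-z})/z. Then -Im F₁(r e^{iθ}) ≥ C^{-1} sin θ · min(r, 1/r) for a universal constant C > 0. -/
open Real Complex

noncomputable def F₁ (z : ℂ) : ℂ := (1 - Complex.exp (-z)) / z

lemma aux_cubic_le_exp (t : ℝ) (ht : 0 ≤ t) : 1 + t + t^2/2 + t^3/6 ≤ Real.exp t := by
  have := Real.sum_le_exp_of_nonneg ht 4
  simp [Finset.sum_range_succ, Nat.factorial] at this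
  linarith

lemma aux_e_gt : (5:ℝ)/2 < Real.exp 1 := by
  have := Real.exp_one_gt_d9; linarith

lemma aux_key (t : ℝ) (ht : 0 ≤ t) :
    (2 * Real.exp 1)⁻¹ * min (t^2) 1 ≤ 1 - Real.exp (-t) * (1 + t) := by
  have hE : (0:ℝ) < Real.exp t := Real.exp_pos t
  have hcubic := aux_cubic_le_exp t ht
  have hinv : (2 * Real.exp 1)⁻¹ ≤ 1/5 := by
    rw [inv_le_comm₀ (by positivity) (by norm_num)]
    have := aux_e_gt; linarith
  have hrw : Real.exp (-t) * (1 + t) = (1 + t) / Real.exp t := by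
    rw [Real.exp_neg]; ring
  rw [hrw]
  rcases le_or_gt t 1 with h1 | h1
  · have hmin : min (t^2) 1 = t^2 := min_eq_left (by nlinarith)
    rw [hmin]
    have hq : (0:ℝ) < 1 + t + t^2/2 := by nlinarith
    have h2 : (1 + t) / Real.exp t ≤ (1 + t) / (1 + t + t^2/2) :=
      div_le_div_of_nonneg_left (by linarith) hq (by nlinarith)
    have h3 : (1 + t) / (1 + t + t^2/2) ≤ 1 - t^2/5 := by
      rw [div_le_iff₀ hq]
      nlinarith [mul_nonneg (sq_nonneg t) (by nlinarith : (0:ℝ) ≤ 1 - t^2),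
        mul_nonneg (sq_nonneg t) (by nlinarith : (0:ℝ) ≤ 1 - t)]
    have h4 : (2 * Real.exp 1)⁻¹ * t^2 ≤ t^2/5 := by nlinarith [sq_nonneg t]
    linarith
  · have hmin : min (t^2) 1 = 1 := min_eq_right (by nlinarith)
    rw [hmin]
    have hq : (0:ℝ) < 1 + t + t^2/2 + t^3/6 := by nlinarith
    have h2 : (1 + t) / Real.exp t ≤ (1 + t) / (1 + t + t^2/2 + t^3/6) :=
      div_le_div_of_nonneg_left (by linarith) hq (by nlinarith)
    have h3 : (1 + t) / (1 + t + t^2/2 + t^3/6) ≤ 4/5 := by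
      rw [div_le_iff₀ hq]
      nlinarith [mul_nonneg (sq_nonneg t) (by linarith : (0:ℝ) ≤ t - 1),
        mul_nonneg ht (by linarith : (0:ℝ) ≤ t - 1)]
    linarith [hinv]

lemma aux_im (θ r : ℝ) (hr : 0 < r) :
    (F₁ ((r : ℂ) * Complex.exp (θ * Complex.I))).im
      = (Real.exp (-(r * Real.cos θ)) * Real.sin (r * Real.sin θ + θ) - Real.sin θ) / r := by
  simp only [F₁, Complex.div_im, Complex.sub_re, Complex.sub_im, Complex.one_re, Complex.one_im,
    Complex.exp_re, Complex.exp_im, Complex.neg_re, Complex.neg_im, Complex.mul_re, Complex.mul_im,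
    Complex.ofReal_re, Complex.ofReal_im, Complex.normSq_apply, Real.sin_add,
    Complex.I_re, Complex.I_im, mul_zero, mul_one, sub_zero, zero_add, Real.sin_zero, Real.cos_zero,
    Real.exp_zero]
  field_simp
  ring_nf
  rw [show r ^ 2 * Real.cos θ ^ 2 + r ^ 2 * Real.sin θ ^ 2 = r ^ 2 from by
    nlinarith [Real.sin_sq_add_cos_sq θ]]
  field_simp
  rw [Real.sin_neg, Real.cos_neg]
  ring

theorem stmt_17 :
    ∃ C : ℝ, 0 < C ∧ ∀ θ r : ℝ, 0 < θ → θ < Real.pi / 4 → 0 < r →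
      -(F₁ ((r : ℂ) * Complex.exp (θ * Complex.I))).im ≥
        C⁻¹ * Real.sin θ * min r r⁻¹ := by
  refine ⟨4 * Real.exp 1, by positivity, fun θ r hθ hθ4 hr => ?_⟩
  have hpi := Real.pi_gt_three
  have hs : 0 < Real.sin θ := Real.sin_pos_of_pos_of_lt_pi hθ (by linarith)
  have hc : Real.sqrt 2 / 2 ≤ Real.cos θ := by
    rw [← Real.cos_pi_div_four]
    exact Real.cos_le_cos_of_nonneg_of_le_pi hθ.le (by linarith) hθ4.le
  have h2 : (1:ℝ) < Real.sqrt 2 := by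
    rw [show (1:ℝ) = Real.sqrt 1 by simp]
    exact Real.sqrt_lt_sqrt (by norm_num) (by norm_num)
  have hc0 : 0 < Real.cos θ := by linarith
  have hc2 : 1/2 ≤ Real.cos θ ^ 2 := by
    have h22 : Real.sqrt 2 ^ 2 = 2 := Real.sq_sqrt (by norm_num)
    nlinarith
  set s := Real.sin θ with hsdef
  set c := Real.cos θ with hcdef
  set t := r * c with htdef
  have ht : 0 ≤ t := le_of_lt (mul_pos hr hc0)
  -- bound on sin (r*s + θ)
  have hsin : Real.sin (r * s + θ) ≤ s * (1 + t) := by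
    rw [Real.sin_add]
    have h1 : Real.sin (r * s) ≤ r * s := Real.sin_le (by positivity)
    have h2' : Real.cos (r * s) ≤ 1 := Real.cos_le_one _
    have : Real.sin (r * s) * c ≤ r * s * c := by nlinarith
    nlinarith
  have hexp : (0:ℝ) < Real.exp (-t) := Real.exp_pos _
  -- numerator lower bound
  have hnum : s * ((2 * Real.exp 1)⁻¹ * min (t^2) 1) ≤ s - Real.exp (-t) * Real.sin (r * s + θ) := by
    have h1 : Real.exp (-t) * Real.sin (r * s + θ) ≤ Real.exp (-t) * (s * (1 + t)) :=
      mul_le_mul_of_nonneg_left hsin hexp.le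
    have h2' := aux_key t ht
    nlinarith [mul_le_mul_of_nonneg_left h2' hs.le]
  -- min comparison
  have hminc : min (r^2) 1 / 2 ≤ min (t^2) 1 := by
    have ht2 : r^2/2 ≤ t^2 := by
      have : r^2 * (1/2) ≤ r^2 * c^2 := mul_le_mul_of_nonneg_left hc2 (sq_nonneg r)
      calc r^2/2 = r^2 * (1/2) := by ring
        _ ≤ r^2 * c^2 := this
        _ = t^2 := by ring
    calc min (r^2) 1 / 2 = min (r^2/2) (1/2) := by
          rw [div_eq_mul_inv, min_mul_of_nonneg _ _ (by norm_num : (0:ℝ) ≤ 2⁻¹)]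
          congr 1 <;> ring
      _ ≤ min (t^2) 1 := min_le_min ht2 (by norm_num)
  have hminr : min r r⁻¹ * r = min (r^2) 1 := by
    rw [min_mul_of_nonneg _ _ hr.le, inv_mul_cancel₀ hr.ne', sq]
  rw [ge_iff_le, aux_im θ r hr, ← neg_div, le_div_iff₀ hr, neg_sub, ← hsdef, ← hcdef, ← htdef]
  have hC : (4 * Real.exp 1)⁻¹ = (2 * Real.exp 1)⁻¹ / 2 := by
    rw [div_eq_mul_inv, ← mul_inv]; ring_nf
  calc (4 * Real.exp 1)⁻¹ * s * min r r⁻¹ * r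
      = s * ((2 * Real.exp 1)⁻¹ * (min (r^2) 1 / 2)) := by rw [hC, ← hminr]; ring
    _ ≤ s * ((2 * Real.exp 1)⁻¹ * min (t^2) 1) := by
        have := mul_le_mul_of_nonneg_left hminc (by positivity : (0:ℝ) ≤ (2 * Real.exp 1)⁻¹)
        nlinarith
    _ ≤ s - Real.exp (-t) * Real.sin (r * s + θ) := hnum
end

section
/- For 0 < θ < π/4 and r > 0, sinθ - e^{-r cosθ} sin(r sinθ + θ) ≥ sinθ·(1 - e^{-r cosθ}(1 + r cosθ)), and the right-hand side is ≥ C^{-1} min((r cosθ)², 1) sinθ for a universal constant C. -/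
open Real

lemma exp_quad (x : ℝ) (hx : 0 ≤ x) : 1 + x + x ^ 2 / 4 ≤ Real.exp x := by
  have h1 : x / 2 + 1 ≤ Real.exp (x / 2) := Real.add_one_le_exp _
  have h2 : Real.exp x = Real.exp (x / 2) * Real.exp (x / 2) := by
    rw [← Real.exp_add]; ring_nf
  nlinarith [Real.exp_pos (x / 2)]

lemma key (x : ℝ) (hx : 0 < x) :
    1 - Real.exp (-x) * (1 + x) ≥ (12 : ℝ)⁻¹ * min (x ^ 2) 1 := by
  have hq := exp_quad x hx.le
  have hen : Real.exp (-x) = 1 / Real.exp x := by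
    rw [Real.exp_neg]; ring
  have hep := Real.exp_pos x
  rcases le_total x 1 with h | h
  · rw [min_eq_left (by nlinarith : x ^ 2 ≤ 1)]
    have he3 : Real.exp x ≤ 3 := by
      calc Real.exp x ≤ Real.exp 1 := Real.exp_le_exp.2 h
        _ ≤ 3 := by have := Real.exp_one_lt_d9; linarith
    rw [hen, ge_iff_le, ← sub_nonneg]
    have : 1 - 1 / Real.exp x * (1 + x) - 12⁻¹ * x ^ 2 =
        (Real.exp x - 1 - x - 12⁻¹ * x ^ 2 * Real.exp x) / Real.exp x := by
      field_simp; ring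
    rw [this]
    apply div_nonneg _ hep.le
    nlinarith [sq_nonneg x]
  · rw [min_eq_right (by nlinarith : (1:ℝ) ≤ x ^ 2)]
    rw [hen]
    rw [ge_iff_le, ← sub_nonneg]
    have : 1 - 1 / Real.exp x * (1 + x) - 12⁻¹ * 1 =
        ((11/12) * Real.exp x - (1 + x)) / Real.exp x := by
      field_simp; ring
    rw [this]
    apply div_nonneg _ hep.le
    nlinarith

theorem stmt_18 :
    (∀ θ r : ℝ, 0 < θ → θ < Real.pi / 4 → 0 < r →
        Real.sin θ - Real.exp (-(r * Real.cos θ)) * Real.sin (r * Real.sin θ + θ) ≥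
          Real.sin θ * (1 - Real.exp (-(r * Real.cos θ)) * (1 + r * Real.cos θ))) ∧
      ∃ C : ℝ, 0 < C ∧ ∀ θ r : ℝ, 0 < θ → θ < Real.pi / 4 → 0 < r →
        Real.sin θ * (1 - Real.exp (-(r * Real.cos θ)) * (1 + r * Real.cos θ)) ≥
          C⁻¹ * min ((r * Real.cos θ) ^ 2) 1 * Real.sin θ := by
  constructor
  · intro θ r hθ hθ4 hr
    have hθπ : θ < Real.pi / 2 := by
      have := Real.pi_pos; linarith
    have hs : 0 < Real.sin θ := Real.sin_pos_of_pos_of_lt_pi hθ (by linarith [Real.pi_pos])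
    have hc : 0 < Real.cos θ := Real.cos_pos_of_mem_Ioo ⟨by linarith [Real.pi_pos], hθπ⟩
    have hrs : 0 ≤ r * Real.sin θ := by positivity
    have hsin : Real.sin (r * Real.sin θ + θ) ≤ Real.sin θ * (1 + r * Real.cos θ) := by
      rw [Real.sin_add]
      have h1 : Real.sin (r * Real.sin θ) ≤ r * Real.sin θ := Real.sin_le hrs
      have h2 : Real.cos (r * Real.sin θ) ≤ 1 := Real.cos_le_one _
      nlinarith [Real.neg_one_le_sin (r * Real.sin θ)]
    have hep := Real.exp_pos (-(r * Real.cos θ))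
    nlinarith
  · refine ⟨12, by norm_num, fun θ r hθ hθ4 hr => ?_⟩
    have hθπ : θ < Real.pi / 2 := by
      have := Real.pi_pos; linarith
    have hs : 0 < Real.sin θ := Real.sin_pos_of_pos_of_lt_pi hθ (by linarith [Real.pi_pos])
    have hc : 0 < Real.cos θ := Real.cos_pos_of_mem_Ioo ⟨by linarith [Real.pi_pos], hθπ⟩
    have hx : 0 < r * Real.cos θ := by positivity
    have h := key (r * Real.cos θ) hx
    calc Real.sin θ * (1 - Real.exp (-(r * Real.cos θ)) * (1 + r * Real.cos θ))
        ≥ Real.sin θ * ((12:ℝ)⁻¹ * min ((r * Real.cos θ) ^ 2) 1) := by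
          apply mul_le_mul_of_nonneg_left h hs.le
      _ = (12:ℝ)⁻¹ * min ((r * Real.cos θ) ^ 2) 1 * Real.sin θ := by ring
end
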